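/- arXiv:1401.3995 — 4 statements merged into one kernel-verified Lean document; each statement's English description precedes it below -/
import Mathlib

section
/- For any uplink shifts e1, e2, e3 ∈ ZMod 3, there exist offsets p12, p13, p21, p23, p31, p32 ∈ ZMod 3 such that (signal alignment at the relay) e1 + p21 = e2 + p12, e1 + p31 = e3 + p13, e2 + p32 = e3 + p23, and (intra-user separability) p21 ≠ p31, p12 ≠ p32, p13 ≠ p23, and moreover the three aligned sums e1 + p21, e1 + p31, e2 + p32 are pairwise distinct elements of ZMod 3. -/
theorem cyclic_SA_Y_channel_elementary (e1 e2 e3 : ZMod 3) :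
    ∃ p12 p13 p21 p23 p31 p32 : ZMod 3,
      -- signal alignment at the relay
      e1 + p21 = e2 + p12 ∧
      e1 + p31 = e3 + p13 ∧
      e2 + p32 = e3 + p23 ∧
      -- intra-user separability
      p21 ≠ p31 ∧ p12 ≠ p32 ∧ p13 ≠ p23 ∧
      -- the three aligned relay dimensions are pairwise distinct
      e1 + p21 ≠ e1 + p31 ∧
      e1 + p21 ≠ e2 + p32 ∧
      e1 + p31 ≠ e2 + p32 := by
  refine ⟨-e2, 1 - e3, -e1, 2 - e3, 1 - e1, 2 - e2, by ring, by ring, by ring,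
    fun h => ?_, fun h => ?_, fun h => ?_, fun h => ?_, fun h => ?_, fun h => ?_⟩
  · exact (by decide : (0:ZMod 3) ≠ 1) (by linear_combination h)
  · exact (by decide : (0:ZMod 3) ≠ 2) (by linear_combination h)
  · exact (by decide : (1:ZMod 3) ≠ 2) (by linear_combination h)
  · exact (by decide : (0:ZMod 3) ≠ 1) (by linear_combination h)
  · exact (by decide : (0:ZMod 3) ≠ 2) (by linear_combination h)
  · exact (by decide : (1:ZMod 3) ≠ 2) (by linear_combination h)
end

section
/- For nonnegative integers α1, α2, α3 (not all zero), setting α23 = α32 = α1, α13 = α31 = α2, α12 = α21 = α3 makes n1 = n2 = n3 = α1 + α2 + α3 where n_j = α_{ji} + α_{jk} + max(α_{ik}, α_{ki}), and the ratio M / max(n1, n2, n3) equals exactly 2, where M is the sum of all six α_{ji}. -/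
theorem symmetric_messages_achieve_two_dof
    (α1 α2 α3 : ℕ) (hpos : ¬(α1 = 0 ∧ α2 = 0 ∧ α3 = 0))
    (α12 α21 α13 α31 α23 α32 n1 n2 n3 M : ℕ)
    (h23 : α23 = α1) (h32 : α32 = α1)
    (h13 : α13 = α2) (h31 : α31 = α2)
    (h12 : α12 = α3) (h21 : α21 = α3)
    (hn1 : n1 = α12 + α13 + max α23 α32)
    (hn2 : n2 = α21 + α23 + max α13 α31)
    (hn3 : n3 = α31 + α32 + max α12 α21)
    (hM : M = α12 + α21 + α13 + α31 + α23 + α32) :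
    n1 = α1 + α2 + α3 ∧ n2 = α1 + α2 + α3 ∧ n3 = α1 + α2 + α3 ∧
    (M : ℚ) / (max n1 (max n2 n3) : ℚ) = 2 := by
  have hmax1 : max α23 α32 = α1 := by omega
  have hmax2 : max α13 α31 = α2 := by omega
  have hmax3 : max α12 α21 = α3 := by omega
  have e1 : n1 = α1 + α2 + α3 := by omega
  have e2 : n2 = α1 + α2 + α3 := by omega
  have e3 : n3 = α1 + α2 + α3 := by omega
  refine ⟨e1, e2, e3, ?_⟩
  have hM2 : M = 2 * (α1 + α2 + α3) := by omega
  have hpos' : 0 < α1 + α2 + α3 := by omega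
  rw [e1, e2, e3, max_self, max_self, hM2]
  have h0 : ((α1 + α2 + α3 : ℕ) : ℚ) ≠ 0 := by
    exact_mod_cast hpos'.ne'
  push_cast
  push_cast at h0
  field_simp
end

section
/- Suppose α12, α21, α13, α31, α23, α32 are nonnegative integers and M / max(n1, n2, n3) = 2, where M is their sum and n_j = α_{ji} + α_{jk} + max(α_{ik}, α_{ki}) for {i,j,k} = {1,2,3}, with max(n1,n2,n3) > 0. Then α12 = α21, α13 = α31, and α23 = α32. -/
theorem two_dof_implies_symmetric
    (α12 α21 α13 α31 α23 α32 n1 n2 n3 M : ℕ)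
    (hn1 : n1 = α12 + α13 + max α23 α32)
    (hn2 : n2 = α21 + α23 + max α13 α31)
    (hn3 : n3 = α31 + α32 + max α12 α21)
    (hM : M = α12 + α21 + α13 + α31 + α23 + α32)
    (hpos : 0 < max n1 (max n2 n3))
    (hdof : (M : ℚ) / (max n1 (max n2 n3) : ℚ) = 2) :
    α12 = α21 ∧ α13 = α31 ∧ α23 = α32 := by
  have hne : ((max n1 (max n2 n3) : ℕ) : ℚ) ≠ 0 := by
    exact_mod_cast hpos.ne'
  rw [← Nat.cast_max, ← Nat.cast_max, div_eq_iff hne] at hdof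
  have h2 : M = 2 * max n1 (max n2 n3) := by exact_mod_cast hdof
  omega
end

section
/- Let K ≥ 2 and let α : Fin K → Fin K → ℕ be a messaging matrix with α j j = 0 for all j. Define M = Σ_{j} Σ_{i} α j i and, for each pair (j, i) with i ≠ j, define D(j,i) = (Σ_{l} α j l) + (Σ_{l} α l i) − α j i. If max over i ≠ j of D(j,i) is positive, then the 3-way-channel DoF bound M / max_{i≠j} D(j,i) is at most K (i.e., M ≤ K · max_{i≠j} D(j,i)). -/
theorem K_user_dof_upper_bound
    (K : ℕ) (hK : 2 ≤ K) (α : Fin K → Fin K → ℕ)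
    (hdiag : ∀ j, α j j = 0)
    (M : ℕ) (hM : M = ∑ j, ∑ i, α j i)
    (D : Fin K → Fin K → ℕ)
    (hD : ∀ j i, D j i = (∑ l, α j l) + (∑ l, α l i) - α j i)
    (N : ℕ)
    (hN : N = (Finset.univ.filter
        (fun q : Fin K × Fin K => q.1 ≠ q.2)).sup (fun q => D q.1 q.2))
    (hpos : 0 < N) :
    M ≤ K * N := by
  have key : ∀ j : Fin K, (∑ i, α j i) ≤ N := by
    intro j
    have : Nontrivial (Fin K) := Fin.nontrivial_iff_two_le.mpr hK
    have : ∃ i : Fin K, i ≠ j := exists_ne j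
    obtain ⟨i, hi⟩ := this
    have hmem : (j, i) ∈ Finset.univ.filter
        (fun q : Fin K × Fin K => q.1 ≠ q.2) := by
      simp [Ne, hi.symm]
    have hle : D j i ≤ N := hN ▸ Finset.le_sup (f := fun q : Fin K × Fin K => D q.1 q.2) hmem
    have hcol : α j i ≤ ∑ l, α l i :=
      Finset.single_le_sum (f := fun l => α l i) (fun _ _ => Nat.zero_le _) (Finset.mem_univ j)
    have : (∑ l, α j l) ≤ D j i := by
      rw [hD]; omega
    omega
  calc M = ∑ j, ∑ i, α j i := hM
    _ ≤ ∑ _j : Fin K, N := Finset.sum_le_sum (fun j _ => key j)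
    _ = K * N := by simp [Finset.sum_const, Finset.card_univ]
end
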